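/- If u : Ω → ℝ is measurable with u > 0 almost everywhere and (1/2)∫_a^b m(s) ds < F(s_*) · μ(Ω), then there exists t_0 > 0 such that for every t ≥ t_0 one has (1/2)∫_a^b m(s) ds − ∫_Ω F_*(t·u(x)) dμ < 0. -/

import Mathlib

/-! `F_*` is nondecreasing, bounded by `F(s_*)` and equal to it on `[s_*, ∞)`, so by dominated
convergence `∫_Ω F_*(t u) dμ → F(s_*) μ(Ω)` as `t → ∞`, because `t u(x) → ∞` almost everywhere.
The limit exceeds `(1/2)∫_a^b m` by assumption. -/

open MeasureTheory Filter Topology Set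

/-- The truncation `f_*` of `f` at level `s_*`. -/
noncomputable def fstar (f : ℝ → ℝ) (sstar : ℝ) (t : ℝ) : ℝ :=
  if t < 0 then f 0 else if t < sstar then f t else 0

/-- `F(t) = ∫_0^t f(s) ds`. -/
noncomputable def Fprim (f : ℝ → ℝ) (t : ℝ) : ℝ := ∫ s in (0:ℝ)..t, f s

/-- `F_*(t) = ∫_0^t f_*(s) ds`. -/
noncomputable def Fstar (f : ℝ → ℝ) (sstar : ℝ) (t : ℝ) : ℝ :=
  ∫ s in (0:ℝ)..t, fstar f sstar s

theorem nonneg_on_Icc_of_pos_on_Ioo {f : ℝ → ℝ} {a b : ℝ} (hf : Continuous f) (hab : a < b)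
    (hpos : ∀ t ∈ Ioo a b, 0 < f t) : ∀ t ∈ Icc a b, 0 ≤ f t := by
  have hsub : Ioo a b ⊆ f ⁻¹' Ici 0 := fun t ht => (hpos t ht).le
  have := (closure_mono hsub).trans (hf.closure_preimage_subset (Ici 0))
  rwa [closure_Ioo hab.ne, closure_Ici] at this

theorem monotone_intervalIntegral_of_nonneg {g : ℝ → ℝ} (hg : Continuous g) (hg0 : ∀ t, 0 ≤ g t)
    (c : ℝ) : Monotone fun t => ∫ s in c..t, g s := by
  intro p q hpq
  have hdiff := intervalIntegral.integral_interval_sub_left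
    (hg.intervalIntegrable (μ := volume) c q) (hg.intervalIntegrable c p)
  have : 0 ≤ ∫ s in p..q, g s := intervalIntegral.integral_nonneg hpq fun t _ => hg0 t
  simp only
  linarith

theorem tendsto_integral_comp_mul_atTop {Ω : Type*} [MeasurableSpace Ω] (μ : Measure Ω)
    [IsFiniteMeasure μ] {u : Ω → ℝ} (hu : Measurable u) (hu0 : ∀ᵐ x ∂μ, 0 < u x)
    {G : ℝ → ℝ} {C L : ℝ} (hG : Measurable G) (hbound : ∀ s, 0 ≤ s → |G s| ≤ C)
    (hlim : Tendsto G atTop (𝓝 L)) :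
    Tendsto (fun t => ∫ x, G (t * u x) ∂μ) atTop (𝓝 (L * μ.real univ)) := by
  have hconst : ∫ _ : Ω, L ∂μ = L * μ.real univ := by
    rw [integral_const, smul_eq_mul, mul_comm]
  rw [← hconst]
  refine tendsto_integral_filter_of_dominated_convergence (fun _ => C)
    (Eventually.of_forall fun t => (hG.comp (hu.const_mul t)).aestronglyMeasurable) ?_
    (integrable_const C) ?_
  · filter_upwards [eventually_ge_atTop 0] with t ht
    filter_upwards [hu0] with x hx
    exact hbound _ (mul_nonneg ht hx.le)
  · filter_upwards [hu0] with x hx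
    exact hlim.comp (tendsto_id.atTop_mul_const hx)

section Truncation

variable {f : ℝ → ℝ} {sstar : ℝ}

theorem fstar_eq_comp_clamp (hs : 0 ≤ sstar) (hfs : f sstar = 0) :
    fstar f sstar = fun t => f (min (max t 0) sstar) := by
  funext t
  unfold fstar
  rcases lt_or_ge t 0 with h | h
  · rw [if_pos h, max_eq_right h.le, min_eq_left hs]
  · rw [if_neg (not_lt.2 h), max_eq_left h]
    rcases lt_or_ge t sstar with h' | h'
    · rw [if_pos h', min_eq_left h'.le]
    · rw [if_neg (not_lt.2 h'), min_eq_right h', hfs]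

theorem continuous_fstar (hf : Continuous f) (hs : 0 ≤ sstar) (hfs : f sstar = 0) :
    Continuous (fstar f sstar) := by
  rw [fstar_eq_comp_clamp hs hfs]
  fun_prop

theorem fstar_nonneg (hf : Continuous f) (hs : 0 < sstar)
    (hfpos : ∀ t ∈ Ioo 0 sstar, 0 < f t) (hfs : f sstar = 0) (t : ℝ) :
    0 ≤ fstar f sstar t := by
  rw [fstar_eq_comp_clamp hs.le hfs]
  exact nonneg_on_Icc_of_pos_on_Ioo hf hs hfpos _
    ⟨le_min (le_max_right _ _) hs.le, min_le_right _ _⟩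

theorem monotone_Fstar (hf : Continuous f) (hs : 0 < sstar)
    (hfpos : ∀ t ∈ Ioo 0 sstar, 0 < f t) (hfs : f sstar = 0) : Monotone (Fstar f sstar) :=
  monotone_intervalIntegral_of_nonneg (continuous_fstar hf hs.le hfs)
    (fstar_nonneg hf hs hfpos hfs) 0

theorem Fstar_eq_Fprim_of_le (hf : Continuous f) (hs : 0 ≤ sstar) (hfs : f sstar = 0)
    {s : ℝ} (hss : sstar ≤ s) : Fstar f sstar s = Fprim f sstar := by
  have hcont := continuous_fstar hf hs hfs
  have htail : ∫ t in sstar..s, fstar f sstar t = 0 := by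
    refine (intervalIntegral.integral_congr fun t ht => ?_).trans intervalIntegral.integral_zero
    rw [uIcc_of_le hss] at ht
    simp only [fstar, if_neg (not_lt.2 (hs.trans ht.1)), if_neg (not_lt.2 ht.1)]
  have hhead : ∫ t in (0:ℝ)..sstar, fstar f sstar t = ∫ t in (0:ℝ)..sstar, f t := by
    refine intervalIntegral.integral_congr fun t ht => ?_
    rw [uIcc_of_le hs] at ht
    simp only [fstar_eq_comp_clamp hs hfs, max_eq_left ht.1, min_eq_left ht.2]
  rw [Fstar, Fprim, ← intervalIntegral.integral_add_adjacent_intervals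
    (hcont.intervalIntegrable 0 sstar) (hcont.intervalIntegrable sstar s), htail, hhead, add_zero]

theorem abs_Fstar_le_Fprim (hf : Continuous f) (hs : 0 < sstar)
    (hfpos : ∀ t ∈ Ioo 0 sstar, 0 < f t) (hfs : f sstar = 0) {s : ℝ} (hs0 : 0 ≤ s) :
    |Fstar f sstar s| ≤ Fprim f sstar := by
  have hmono := monotone_Fstar hf hs hfpos hfs
  have hzero : Fstar f sstar 0 = 0 := intervalIntegral.integral_same
  rw [abs_of_nonneg (hzero ▸ hmono hs0), ← Fstar_eq_Fprim_of_le hf hs.le hfs (le_max_right s sstar)]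
  exact hmono (le_max_left s sstar)

theorem tendsto_Fstar_atTop (hf : Continuous f) (hs : 0 ≤ sstar) (hfs : f sstar = 0) :
    Tendsto (Fstar f sstar) atTop (𝓝 (Fprim f sstar)) :=
  tendsto_const_nhds.congr' <| eventually_atTop.2
    ⟨sstar, fun _ hss => (Fstar_eq_Fprim_of_le hf hs hfs hss).symm⟩

end Truncation

theorem eventually_neg_energy_general {Ω : Type*} [MeasurableSpace Ω]
    (μ : Measure Ω) [IsFiniteMeasure μ]
    (f : ℝ → ℝ) (sstar : ℝ)
    (hf : Continuous f) (hs : 0 < sstar)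
    (hfpos : ∀ t ∈ Set.Ioo (0 : ℝ) sstar, 0 < f t)
    (hfs : f sstar = 0)
    (m : ℝ → ℝ) (a b : ℝ)
    (u : Ω → ℝ) (hu : Measurable u) (hu0 : ∀ᵐ x ∂μ, 0 < u x)
    (harea : (1/2) * ∫ s in a..b, m s < Fprim f sstar * (μ Set.univ).toReal) :
    ∃ t₀ : ℝ, 0 < t₀ ∧ ∀ t : ℝ, t₀ ≤ t →
      (1/2) * (∫ s in a..b, m s) - ∫ x, Fstar f sstar (t * u x) ∂μ < 0 := by
  have hlim := tendsto_integral_comp_mul_atTop μ hu hu0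
    (monotone_Fstar hf hs hfpos hfs).measurable (fun _ => abs_Fstar_le_Fprim hf hs hfpos hfs)
    (tendsto_Fstar_atTop hf hs.le hfs)
  obtain ⟨t₀, ht₀⟩ :=
    ((hlim.eventually (eventually_gt_nhds harea)).and (eventually_gt_atTop 0)).exists_forall_of_atTop
  exact ⟨t₀, (ht₀ t₀ le_rfl).2, fun t ht => sub_neg.2 (ht₀ t ht).1⟩

theorem eventually_neg_energy {Ω : Type*} [MeasurableSpace Ω]
    (μ : Measure Ω) [IsFiniteMeasure μ]
    (f : ℝ → ℝ) (sstar : ℝ)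
    (hf : Continuous f) (hs : 0 < sstar)
    (hfpos : ∀ t ∈ Set.Ioo (0 : ℝ) sstar, 0 < f t)
    (hfs : f sstar = 0)
    (m : ℝ → ℝ) (a b : ℝ) (hm : Continuous m) (ha : 0 ≤ a) (hab : a < b)
    (hmpos : ∀ t ∈ Set.Ioo a b, 0 < m t) (hmb : m b = 0)
    (u : Ω → ℝ) (hu : Measurable u) (hu0 : ∀ᵐ x ∂μ, 0 < u x)
    (harea : (1/2) * ∫ s in a..b, m s < Fprim f sstar * (μ Set.univ).toReal) :
    ∃ t₀ : ℝ, 0 < t₀ ∧ ∀ t : ℝ, t₀ ≤ t →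
      (1/2) * (∫ s in a..b, m s) - ∫ x, Fstar f sstar (t * u x) ∂μ < 0 :=
  eventually_neg_energy_general μ f sstar hf hs hfpos hfs m a b u hu hu0 harea
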